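/- arXiv:1505.07253 — 5 statements merged into one kernel-verified Lean document; each statement's English description precedes it below -/
import Mathlib

section
/- The Stirling numbers of the second kind satisfy k·S(n,k) = n · Σ_{i=0}^{n−k} C(n−1,i) · S(n−1−i,k−1)/(i+1) for all n ≥ k ≥ 1. -/
/-- Stirling numbers of the second kind. -/
def stirling2 : ℕ → ℕ → ℕ
  | 0, 0 => 1
  | 0, _ + 1 => 0
  | _ + 1, 0 => 0
  | n + 1, k + 1 => (k + 1) * stirling2 n (k + 1) + stirling2 n k

lemma stirling2_eq_zero_of_lt : ∀ {n k : ℕ}, n < k → stirling2 n k = 0 := by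
  intro n
  induction n with
  | zero =>
    intro k hk
    cases k with
    | zero => omega
    | succ k => rfl
  | succ n ih =>
    intro k hk
    cases k with
    | zero => omega
    | succ k =>
      rw [stirling2, ih (by omega), ih (by omega)]
      ring

lemma key_eq : ∀ n k : ℕ, (k + 1) * stirling2 n (k + 1) =
    ∑ m ∈ Finset.range n, n.choose (m + 1) * stirling2 (n - 1 - m) k := by
  intro n
  induction n with
  | zero =>
    intro k
    simp [stirling2_eq_zero_of_lt (Nat.succ_pos k)]
  | succ n ih =>
    intro k
    have hsplit : (∑ m ∈ Finset.range (n + 1),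
        (n + 1).choose (m + 1) * stirling2 (n + 1 - 1 - m) k)
        = (∑ m ∈ Finset.range (n + 1), n.choose m * stirling2 (n - m) k)
          + ∑ m ∈ Finset.range (n + 1), n.choose (m + 1) * stirling2 (n - m) k := by
      rw [← Finset.sum_add_distrib]
      refine Finset.sum_congr rfl fun m hm => ?_
      rw [Nat.choose_succ_succ]
      have : n + 1 - 1 - m = n - m := by omega
      rw [this]; ring
    have hpart2 : (∑ m ∈ Finset.range (n + 1), n.choose m * stirling2 (n - m) k)
        = (∑ m ∈ Finset.range n, n.choose (m + 1) * stirling2 (n - 1 - m) k)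
          + stirling2 n k := by
      rw [Finset.sum_range_succ']
      simp only [Nat.choose_zero_right, Nat.sub_zero, one_mul]
      congr 1
      refine Finset.sum_congr rfl fun m hm => ?_
      congr 2
      omega
    have hpart1 : (∑ m ∈ Finset.range (n + 1), n.choose (m + 1) * stirling2 (n - m) k)
        = ∑ m ∈ Finset.range n, n.choose (m + 1) * stirling2 (n - m) k := by
      rw [Finset.sum_range_succ]
      simp [Nat.choose_succ_self]
    rw [hsplit, hpart2, hpart1]
    cases k with
    | zero =>
      have h1 : (∑ m ∈ Finset.range n, n.choose (m + 1) * stirling2 (n - m) 0) = 0 := by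
        refine Finset.sum_eq_zero fun m hm => ?_
        have hm' : m < n := Finset.mem_range.mp hm
        have : n - m = (n - m - 1) + 1 := by omega
        rw [this, stirling2]
        ring
      rw [h1, stirling2, ← ih 0]
      ring
    | succ t =>
      have h1 : (∑ m ∈ Finset.range n, n.choose (m + 1) * stirling2 (n - m) (t + 1))
          = (t + 1) * (∑ m ∈ Finset.range n, n.choose (m + 1) * stirling2 (n - 1 - m) (t + 1))
            + ∑ m ∈ Finset.range n, n.choose (m + 1) * stirling2 (n - 1 - m) t := by
        rw [Finset.mul_sum, ← Finset.sum_add_distrib]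
        refine Finset.sum_congr rfl fun m hm => ?_
        have hm' : m < n := Finset.mem_range.mp hm
        have : n - m = (n - 1 - m) + 1 := by omega
        rw [this, stirling2]
        ring
      rw [h1, ← ih (t + 1), ← ih t, stirling2]
      ring

/-- Recurrence for the Stirling numbers of the second kind:
`k·S(n,k) = n·Σ_{i=0}^{n-k} C(n-1,i)·S(n-1-i,k-1)/(i+1)` for `n ≥ k ≥ 1`. -/
theorem stirling2_recurrence (n k : ℕ) (hk : 1 ≤ k) (hkn : k ≤ n) :
    (k : ℚ) * stirling2 n k =
      (n : ℚ) * ∑ i ∈ Finset.range (n - k + 1),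
        ((n - 1).choose i : ℚ) * (stirling2 (n - 1 - i) (k - 1) : ℚ) / (i + 1) := by
  obtain ⟨n', rfl⟩ : ∃ n', n = n' + 1 := ⟨n - 1, by omega⟩
  obtain ⟨t, rfl⟩ : ∃ t, k = t + 1 := ⟨k - 1, by omega⟩
  have hRHS : ((n' + 1 : ℕ) : ℚ) * ∑ i ∈ Finset.range (n' + 1 - (t + 1) + 1),
        ((n' + 1 - 1).choose i : ℚ) * (stirling2 (n' + 1 - 1 - i) (t + 1 - 1) : ℚ) / (i + 1)
      = ∑ i ∈ Finset.range (n' + 1 - (t + 1) + 1),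
        (((n' + 1).choose (i + 1) : ℕ) : ℚ) * (stirling2 (n' + 1 - 1 - i) t : ℚ) := by
    rw [Finset.mul_sum]
    refine Finset.sum_congr rfl fun i hi => ?_
    have hc : (n' + 1) * n'.choose i = (n' + 1).choose (i + 1) * (i + 1) :=
      Nat.add_one_mul_choose_eq n' i
    have hcq : ((n' + 1 : ℕ) : ℚ) * (n'.choose i : ℚ)
        = ((n' + 1).choose (i + 1) : ℚ) * ((i : ℚ) + 1) := by
      exact_mod_cast congrArg (Nat.cast : ℕ → ℚ) hc
    have hne : ((i : ℚ) + 1) ≠ 0 := by positivity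
    have h1 : n' + 1 - 1 = n' := by omega
    have h2 : t + 1 - 1 = t := by omega
    rw [h1, h2]
    field_simp
    push_cast at hcq ⊢
    linear_combination (stirling2 (n' - i) t : ℚ) * hcq
  rw [hRHS]
  have hext : (∑ i ∈ Finset.range (n' + 1 - (t + 1) + 1),
        (((n' + 1).choose (i + 1) : ℕ) : ℚ) * (stirling2 (n' + 1 - 1 - i) t : ℚ))
      = ∑ i ∈ Finset.range (n' + 1),
        (((n' + 1).choose (i + 1) : ℕ) : ℚ) * (stirling2 (n' + 1 - 1 - i) t : ℚ) := by
    refine Finset.sum_subset ?_ fun i hi hni => ?_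
    · intro i hi
      simp only [Finset.mem_range] at *
      omega
    · simp only [Finset.mem_range] at hi hni
      have : n' + 1 - 1 - i < t := by omega
      rw [stirling2_eq_zero_of_lt this]
      simp
  rw [hext]
  have := key_eq (n' + 1) t
  have hq := congrArg (Nat.cast : ℕ → ℚ) this
  push_cast at hq ⊢
  rw [hq]
end

section
/- Define the generalized Cauchy numbers 𝒞_i^{(k)} := i!·[t^i] (t/log(1+t))^k over ℚ. Then for all n ≥ k ≥ 1, the Stirling numbers of the second kind satisfy S(n,k) = C(n,k) · Σ_{i=0}^{n−k} 𝒞_i^{(k)} · S(n−k, i). -/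
/-!
Since `log (1 + t)` composed with `e^t - 1` is `t` (both have derivative `1`), substituting
`e^t - 1` into `(t / log (1 + t))^k` gives `((e^t - 1) / t)^k`. Comparing the coefficients of
`t^(n-k)`, after expanding `(e^t - 1)^i = i! Σₙ S(n,i) tⁿ / n!` on both sides, gives the identity.
-/

open PowerSeries Finset

/-- `log(1+t)/t = Σ_{m≥0} (-1)^m t^m/(m+1)` as a formal power series over `ℚ`. -/
noncomputable def logSeriesDivT : PowerSeries ℚ :=
  PowerSeries.mk fun m => (-1 : ℚ) ^ m / (m + 1)

/-- The generalized Cauchy numbers: `𝒞_i^{(k)} = i!·[t^i](t/log(1+t))^k`. -/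
noncomputable def cauchyNumGen (i k : ℕ) : ℚ :=
  (i.factorial : ℚ) * PowerSeries.coeff i (logSeriesDivT⁻¹ ^ k)

open Nat in
theorem stirling2_eq_stirlingSecond : ∀ n k : ℕ, stirling2 n k = stirlingSecond n k
  | 0, 0 | 0, _ + 1 | _ + 1, 0 => rfl
  | n + 1, k + 1 => by
    rw [stirling2, stirlingSecond_succ_succ, stirling2_eq_stirlingSecond n (k + 1),
      stirling2_eq_stirlingSecond n k]

namespace PowerSeries

variable {A : Type*} [CommRing A]

theorem coeff_subst_eq_sum_range {g : A⟦X⟧} (hg : constantCoeff g = 0) (f : A⟦X⟧) (m : ℕ) :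
    coeff m (f.subst g) = ∑ i ∈ range (m + 1), coeff i f * coeff m (g ^ i) := by
  rw [coeff_subst' (HasSubst.of_constantCoeff_zero' hg)]
  refine finsum_eq_sum_of_support_subset _ fun i hi => mem_range.2 ?_
  by_contra! hmi
  refine hi ?_
  show coeff i f • coeff m (g ^ i) = 0
  rw [smul_eq_mul, coeff_of_lt_order m ?_, mul_zero]
  exact lt_of_lt_of_le (by exact_mod_cast hmi) (le_order_pow_of_constantCoeff_eq_zero i hg)

variable [Algebra ℚ A]

theorem derivative_exp_sub_one_pow_succ (k : ℕ) :
    d⁄dX A ((exp A - 1) ^ (k + 1)) =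
      C ((k : A) + 1) * ((exp A - 1) ^ (k + 1) + (exp A - 1) ^ k) := by
  rw [derivative_pow, map_sub, derivative_exp, derivative_one, sub_zero, Nat.add_sub_cancel]
  simp only [map_add, map_natCast, map_one]
  push_cast
  ring

open Nat in
theorem factorial_mul_coeff_exp_sub_one_pow (n k : ℕ) :
    (n ! : A) * coeff n ((exp A - 1) ^ k) = k ! * stirlingSecond n k := by
  induction n generalizing k with
  | zero =>
    rcases k with _ | k
    · simp
    · simp [coeff_zero_eq_constantCoeff, constantCoeff_exp]
  | succ n ih =>
    rcases k with _ | k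
    · simp [coeff_one]
    · have hd := congrArg (coeff n) (derivative_exp_sub_one_pow_succ (A := A) k)
      rw [coeff_derivative] at hd
      calc ((n + 1) ! : A) * coeff (n + 1) ((exp A - 1) ^ (k + 1))
          = n ! * (coeff (n + 1) ((exp A - 1) ^ (k + 1)) * (n + 1)) := by
            push_cast [factorial_succ]; ring
        _ = (k + 1) *
              (n ! * coeff n ((exp A - 1) ^ (k + 1)) + n ! * coeff n ((exp A - 1) ^ k)) := by
            rw [hd, coeff_C_mul, map_add]; ring
        _ = (k + 1) ! * stirlingSecond (n + 1) (k + 1) := by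
            rw [ih, ih, stirlingSecond_succ_succ]
            push_cast [factorial_succ]; ring

theorem derivative_log_mul_one_add_X : d⁄dX A (log A) * (1 + X) = 1 := by
  ext n
  rcases n with _ | n
  · simp [deriv_log]
  · simp [deriv_log, mul_add, coeff_succ_mul_X, pow_succ]

theorem log_subst_exp_sub_one : (log A).subst (exp A - 1) = X := by
  have : IsAddTorsionFree A := .of_module_rat A
  have hE : HasSubst (exp A - 1) := HasSubst.exp_sub_one
  have hinv := congrArg (substAlgHom hE) (derivative_log_mul_one_add_X (A := A))
  rw [map_mul, map_add, map_one, substAlgHom_X, add_sub_cancel, coe_substAlgHom] at hinv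
  refine derivative.ext ?_ ?_
  · rw [derivative_subst hE, map_sub, derivative_exp, derivative_one, sub_zero, hinv,
      derivative_X]
  · rw [constantCoeff_X]
    refine constantCoeff_subst_eq_zero ?_ _ constantCoeff_log
    rw [map_sub, map_one, ← constantCoeff_eq, constantCoeff_exp, sub_self]

end PowerSeries

theorem logSeriesDivT_mul_X : logSeriesDivT * X = log ℚ := by
  ext n
  rcases n with _ | n
  · simp
  · rw [coeff_succ_mul_X, logSeriesDivT, coeff_mk, coeff_log, if_neg n.succ_ne_zero,
      Algebra.algebraMap_self_apply]
    push_cast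
    ring

theorem constantCoeff_logSeriesDivT : constantCoeff logSeriesDivT = 1 := by
  simp [logSeriesDivT, ← coeff_zero_eq_constantCoeff_apply]

theorem inv_logSeriesDivT_subst_mul_X :
    (logSeriesDivT⁻¹).subst (exp ℚ - 1) * X = exp ℚ - 1 := by
  have hE : HasSubst (exp ℚ - 1) := HasSubst.exp_sub_one
  have hL : logSeriesDivT⁻¹ * logSeriesDivT = 1 :=
    PowerSeries.inv_mul_cancel _ (by rw [constantCoeff_logSeriesDivT]; exact one_ne_zero)
  calc (logSeriesDivT⁻¹).subst (exp ℚ - 1) * X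
      = substAlgHom hE logSeriesDivT⁻¹ * substAlgHom hE (logSeriesDivT * X) := by
        rw [logSeriesDivT_mul_X, coe_substAlgHom, log_subst_exp_sub_one]
    _ = exp ℚ - 1 := by
        rw [← map_mul, ← mul_assoc, hL, one_mul, substAlgHom_X]

theorem coeff_inv_logSeriesDivT_pow_subst (k m : ℕ) :
    coeff m ((logSeriesDivT⁻¹ ^ k).subst (exp ℚ - 1)) = coeff (m + k) ((exp ℚ - 1) ^ k) := by
  rw [← coeff_mul_X_pow _ k m, subst_pow HasSubst.exp_sub_one, ← mul_pow,
    inv_logSeriesDivT_subst_mul_X]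

open Nat in
theorem sum_cauchyNumGen_mul_stirling2 (k m : ℕ) :
    ∑ i ∈ range (m + 1), cauchyNumGen i k * (stirling2 m i : ℚ) =
      m ! * coeff (m + k) ((exp ℚ - 1) ^ k) := by
  rw [← coeff_inv_logSeriesDivT_pow_subst,
    coeff_subst_eq_sum_range (by simp [constantCoeff_exp]), mul_sum]
  refine sum_congr rfl fun i _ => ?_
  rw [cauchyNumGen, stirling2_eq_stirlingSecond, mul_left_comm,
    factorial_mul_coeff_exp_sub_one_pow]
  ring

theorem stirling2_generalizedCauchy_general (n k : ℕ) (hkn : k ≤ n) :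
    (stirling2 n k : ℚ) =
      (n.choose k : ℚ) * ∑ i ∈ Finset.range (n - k + 1),
        cauchyNumGen i k * (stirling2 (n - k) i : ℚ) := by
  obtain ⟨m, rfl⟩ : ∃ m, n = m + k := ⟨n - k, by omega⟩
  have hegf := factorial_mul_coeff_exp_sub_one_pow (A := ℚ) (m + k) k
  rw [Nat.add_sub_cancel, sum_cauchyNumGen_mul_stirling2, Nat.cast_choose ℚ hkn,
    Nat.add_sub_cancel, stirling2_eq_stirlingSecond]
  field_simp
  linear_combination -hegf

/-- `S(n,k) = C(n,k)·Σ_{i=0}^{n-k} 𝒞_i^{(k)}·S(n-k,i)` for `n ≥ k ≥ 1`. -/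
theorem stirling2_generalizedCauchy (n k : ℕ) (hk : 1 ≤ k) (hkn : k ≤ n) :
    (stirling2 n k : ℚ) =
      (n.choose k : ℚ) * ∑ i ∈ Finset.range (n - k + 1),
        cauchyNumGen i k * (stirling2 (n - k) i : ℚ) :=
  stirling2_generalizedCauchy_general n k hkn
end

section
/- Define generalized Catalan numbers C_i^{(m)} := [t^i] (2/(1+√(1−4t)))^m, where 2/(1+√(1−4t)) is the formal power series c(t) satisfying c(t) = 1 + t·c(t)^2 (the Catalan number generating function). Then for all integers m, n, k with n ≥ k ≥ 0 and 2k − n ≥ m ≥ 0, one has C(n,k) = Σ_{i=0}^{n−k} C_i^{(m)} · C(n−m−2i, k−m−i). -/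
/-!
Write `D = Σ C(2r, r) tʳ = 1/√(1 - 4t)`. From `c^(m+1) = c^m + t·c^(m+2)` and Pascal's rule one gets
`[tʲ] c^m·D = C(2j + m, j)` for all `j, m`. Writing `C(n - m - 2i, k - m - i)` as
`C(2(j - i) + s, j - i) = [t^(j-i)] c^s·D` with `j = n - k` and `s = 2k - n - m`, the sum in the
theorem is the coefficient `[tʲ] c^m·(c^s·D) = [tʲ] c^(m+s)·D = C(n, n - k)`.
-/

open PowerSeries Finset

namespace PowerSeries

variable {R : Type*} [CommSemiring R]

noncomputable def centralBinomSeries (R : Type*) [CommSemiring R] : R⟦X⟧ :=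
  mk fun r => ((2 * r).choose r : R)

section CatalanEquation

variable {c : R⟦X⟧} (hc : c = 1 + X * c ^ 2)
include hc

theorem constantCoeff_eq_one_of_eq_one_add_X_mul_sq : constantCoeff c = 1 := by
  rw [hc]; simp

theorem pow_succ_eq_pow_add_X_mul_pow_of_eq_one_add_X_mul_sq (m : ℕ) :
    c ^ (m + 1) = c ^ m + X * c ^ (m + 2) := by
  calc c ^ (m + 1) = c ^ m * (1 + X * c ^ 2) := by rw [pow_succ, ← hc]
    _ = c ^ m + X * c ^ (m + 2) := by ring

theorem coeff_pow_mul_centralBinomSeries_of_eq_one_add_X_mul_sq (j m : ℕ) :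
    coeff j (c ^ m * centralBinomSeries R) = ((2 * j + m).choose j : R) := by
  induction j generalizing m with
  | zero =>
    simp [map_pow, constantCoeff_eq_one_of_eq_one_add_X_mul_sq hc, centralBinomSeries]
  | succ j ihj =>
    induction m with
    | zero => simp [centralBinomSeries]
    | succ m ihm =>
      have pascal : (2 * (j + 1) + (m + 1)).choose (j + 1)
          = (2 * (j + 1) + m).choose (j + 1) + (2 * j + (m + 2)).choose j := by
        rw [show 2 * (j + 1) + (m + 1) = (2 * j + m + 2) + 1 by ring, Nat.choose_succ_succ']
        ring_nf
      rw [pow_succ_eq_pow_add_X_mul_pow_of_eq_one_add_X_mul_sq hc, add_mul, map_add, ihm,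
        mul_assoc, coeff_succ_X_mul, ihj, pascal, Nat.cast_add]

theorem sum_coeff_pow_mul_choose_of_eq_one_add_X_mul_sq (m s j : ℕ) :
    ∑ i ∈ range (j + 1), coeff i (c ^ m) * ((2 * (j - i) + s).choose (j - i) : R) =
      ((2 * j + m + s).choose j : R) := by
  have hconv := coeff_pow_mul_centralBinomSeries_of_eq_one_add_X_mul_sq hc j (m + s)
  rw [pow_add, mul_assoc, coeff_mul, Nat.sum_antidiagonal_eq_sum_range_succ_mk] at hconv
  rw [← add_assoc] at hconv
  rw [← hconv]
  refine sum_congr rfl fun i _ => ?_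
  rw [coeff_pow_mul_centralBinomSeries_of_eq_one_add_X_mul_sq hc]

end CatalanEquation

end PowerSeries

/-- Pascal-array recurrence via generalized Catalan numbers: if `c` is the Catalan
generating function, characterized by `c = 1 + t·c²`, and
`C_i^{(m)} = [t^i] c^m`, then for `n ≥ k` and `0 ≤ m ≤ 2k - n`,
`C(n,k) = Σ_{i=0}^{n-k} C_i^{(m)} · C(n-m-2i, k-m-i)`. -/
theorem choose_eq_sum_catalanGen (c : PowerSeries ℚ)
    (hc : c = 1 + PowerSeries.X * c ^ 2)
    (m n k : ℕ) (hkn : k ≤ n) (hm : m + n ≤ 2 * k) :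
    (n.choose k : ℚ) =
      ∑ i ∈ Finset.range (n - k + 1),
        PowerSeries.coeff i (c ^ m) * ((n - m - 2 * i).choose (k - m - i) : ℚ) := by
  have hsummand : ∀ i ∈ range (n - k + 1),
      (n - m - 2 * i).choose (k - m - i) =
        (2 * (n - k - i) + (2 * k - m - n)).choose (n - k - i) := by
    intro i hi
    have := mem_range.mp hi
    rw [show n - m - 2 * i = 2 * (n - k - i) + (2 * k - m - n) by omega]
    exact Nat.choose_symm_of_eq_add (by omega)
  rw [sum_congr rfl fun i hi => by rw [hsummand i hi],
    sum_coeff_pow_mul_choose_of_eq_one_add_X_mul_sq hc,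
    show 2 * (n - k) + m + (2 * k - m - n) = n by omega, Nat.choose_symm hkn]
end

section
/- Lagrange inversion (coefficient form): let g ∈ ℚ[[t]] with g(0) = 1 invertible, and let φ(t) = t·g(t), with compositional inverse φ^{⟨−1⟩}. Then for any f ∈ ℚ[[t]] and all n ≥ 1: n·[t^n] f(φ^{⟨−1⟩}(t)) = [t^{n−1}] f'(t)·(1/g(t))^n. -/
open PowerSeries

/-- Composition `f(u)` of formal power series, valid when `u` has zero constant
coefficient: then `coeff n (u^k) = 0` for `k > n`, so the `n`-th coefficient of
`f(u) = Σ_k (coeff k f)·u^k` only involves terms with `k ≤ n`. -/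
noncomputable def PowerSeries.comp' {R : Type*} [CommRing R] (f u : PowerSeries R) :
    PowerSeries R :=
  PowerSeries.mk fun n =>
    PowerSeries.coeff (R := R) n (∑ k ∈ Finset.range (n + 1), PowerSeries.C (R := R) (PowerSeries.coeff (R := R) k f) * u ^ k)

/-!
Write `φ = X * g`. A right compositional inverse of `φ` is also a left one, so `f = F ∘ φ`
with `F = f ∘ ψ`, and the chain rule gives `f' * g⁻¹ ^ n = Σₘ [tᵐ]F' * φ ^ m * φ' * g⁻¹ ^ n`,
where `φ ^ m * g⁻¹ ^ n = X ^ m * g⁻¹ ^ (n - m)`.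
Everything then rests on a residue computation: with `h = g⁻¹`, the series `h ^ (j + 1) * φ'`
equals `h ^ j - X * (h ^ j)' / j` for `j ≥ 1`, and the `j`-th coefficient of `X * P'` is `j`
times that of `P`, so `[tʲ] h ^ (j + 1) * φ'` is `1` for `j = 0` and `0` otherwise. Only
`m = n - 1` survives, leaving `[t^(n-1)] F' = n * [tⁿ] F`.
-/

namespace PowerSeries

variable {R : Type*}

theorem coeff_pow_eq_zero_of_lt [Semiring R] {a : R⟦X⟧} (ha : constantCoeff a = 0) {n k : ℕ}
    (h : n < k) : coeff n (a ^ k) = 0 :=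
  coeff_of_lt_order n ((Nat.cast_lt.2 h).trans_le (le_order_pow_of_constantCoeff_eq_zero k ha))

theorem coeff_X_mul_derivative [CommSemiring R] (f : R⟦X⟧) (n : ℕ) :
    coeff n (X * d⁄dX R f) = n * coeff n f := by
  cases n with
  | zero => simp
  | succ n => rw [coeff_succ_X_mul, coeff_derivative, mul_comm]; push_cast; rfl

variable [CommRing R]

theorem coeff_subst_eq_sum_range_s15 {a : R⟦X⟧} (ha : constantCoeff a = 0) (f : R⟦X⟧)
    {n N : ℕ} (hn : n < N) :
    coeff n (f.subst a) = ∑ k ∈ Finset.range N, coeff k f * coeff n (a ^ k) := by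
  rw [coeff_subst' (HasSubst.of_constantCoeff_zero' ha), finsum_eq_sum_of_support_subset]
  · rfl
  · intro k hk
    by_contra hkN
    simp only [Finset.coe_range, Set.mem_Iio, not_lt] at hkN
    exact hk (show coeff k f • coeff n (a ^ k) = 0 by
      rw [coeff_pow_eq_zero_of_lt ha (by omega), smul_zero])

theorem comp'_eq_subst {u : R⟦X⟧} (hu : constantCoeff u = 0) (f : R⟦X⟧) :
    f.comp' u = f.subst u := by
  ext n
  simp [comp', coeff_C_mul, coeff_subst_eq_sum_range_s15 hu f n.lt_succ_self]

theorem coeff_subst_mul {a : R⟦X⟧} (ha : constantCoeff a = 0) (f w : R⟦X⟧) (n : ℕ) :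
    coeff n (f.subst a * w) = ∑ k ∈ Finset.range (n + 1), coeff k f * coeff n (a ^ k * w) := by
  simp only [coeff_mul, Finset.mul_sum]
  rw [Finset.sum_comm]
  refine Finset.sum_congr rfl fun p hp => ?_
  rw [coeff_subst_eq_sum_range_s15 ha f (N := n + 1)
    (by rw [Finset.HasAntidiagonal.mem_antidiagonal] at hp; omega), Finset.sum_mul]
  exact Finset.sum_congr rfl fun _ _ => mul_assoc _ _ _

theorem subst_eq_X_of_subst_eq_X {φ ψ : R⟦X⟧} (hφ : constantCoeff φ = 0)
    (hφ₁ : IsUnit (coeff 1 φ)) (hψ : HasSubst ψ) (h : φ.subst ψ = X) : ψ.subst φ = X := by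
  have hψ_eq : ψ = φ.substInvOfIsUnit hφ₁ := calc
    ψ = subst ψ (X : R⟦X⟧) := (subst_X hψ).symm
    _ = subst ψ (subst φ (φ.substInvOfIsUnit hφ₁)) := by
      rw [subst_substInvOfIsUnit_left φ hφ]
    _ = φ.substInvOfIsUnit hφ₁ := by
      rw [subst_comp_subst_apply (HasSubst.of_constantCoeff_zero' hφ) hψ, h, X_subst]
  rw [hψ_eq, subst_substInvOfIsUnit_left φ hφ]

theorem X_mul_derivative_pow_of_mul_eq_one {g h : R⟦X⟧} (hgh : h * g = 1) (m : ℕ) :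
    X * d⁄dX R (h ^ m) = m • (h ^ m - h ^ (m + 1) * d⁄dX R (X * g)) := by
  have hh : d⁄dX R h = -(h ^ 2 * d⁄dX R g) := by
    have h0 : d⁄dX R (h * g) = 0 := by rw [hgh, derivative_one]
    rw [Derivation.leibniz, smul_eq_mul, smul_eq_mul] at h0
    linear_combination h * h0 - d⁄dX R h * hgh
  rw [derivative_pow, hh, Derivation.leibniz, derivative_X, smul_eq_mul, smul_eq_mul,
    nsmul_eq_mul]
  cases m with
  | zero => simp
  | succ j => push_cast; linear_combination ((j + 1) * h ^ (j + 1) : R⟦X⟧) * hgh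

theorem coeff_pow_succ_mul_derivative_X_mul [IsAddTorsionFree R] {g h : R⟦X⟧} (hgh : h * g = 1)
    (m : ℕ) : coeff m (h ^ (m + 1) * d⁄dX R (X * g)) = if m = 0 then 1 else 0 := by
  split_ifs with hm
  · subst hm
    have := congrArg constantCoeff hgh
    simp only [map_mul, map_one] at this
    simpa [coeff_derivative, Derivation.leibniz] using this
  · have key := congrArg (coeff m) (X_mul_derivative_pow_of_mul_eq_one hgh m)
    rw [coeff_X_mul_derivative, ← nsmul_eq_mul, map_nsmul, map_sub, smul_sub, eq_comm,
      sub_eq_self, ← smul_zero m] at key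
    exact nsmul_right_injective hm key

theorem coeff_X_mul_pow_mul_derivative [IsAddTorsionFree R] {g h : R⟦X⟧} (hgh : h * g = 1)
    {m k : ℕ} (hmk : m ≤ k) :
    coeff k ((X * g) ^ m * (d⁄dX R (X * g) * h ^ (k + 1))) = if m = k then 1 else 0 := by
  obtain ⟨j, rfl⟩ := Nat.exists_eq_add_of_le hmk
  have : (X * g) ^ m * (d⁄dX R (X * g) * h ^ (m + j + 1)) =
      X ^ m * (h ^ (j + 1) * d⁄dX R (X * g)) := by
    rw [show m + j + 1 = m + (j + 1) by ring, pow_add, mul_pow]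
    have hgm : (h * g) ^ m = 1 := by rw [hgh, one_pow]
    linear_combination (X ^ m * h ^ (j + 1) * d⁄dX R (X * g)) * hgm
  rw [this, coeff_X_pow_mul', if_pos (by omega), Nat.add_sub_cancel_left,
    coeff_pow_succ_mul_derivative_X_mul hgh]
  simp

end PowerSeries

/-- Lagrange inversion, coefficient form: if `g(0) = 1`, `φ(t) = t·g(t)`, and `ψ` is the
compositional inverse of `φ` (i.e. `ψ(0) = 0` and `φ(ψ(t)) = t`), then for `n ≥ 1`,
`n·[t^n] f(ψ(t)) = [t^{n-1}] f'(t)·(1/g(t))^n`. -/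
theorem lagrange_inversion (g f ψ : PowerSeries ℚ)
    (hg : PowerSeries.constantCoeff (R := ℚ) g = 1)
    (hψ0 : PowerSeries.constantCoeff (R := ℚ) ψ = 0)
    (hinv : PowerSeries.comp' (PowerSeries.X * g) ψ = PowerSeries.X)
    (n : ℕ) (hn : 1 ≤ n) :
    (n : ℚ) * PowerSeries.coeff (R := ℚ) n (PowerSeries.comp' f ψ) =
      PowerSeries.coeff (R := ℚ) (n - 1) (PowerSeries.derivativeFun f * (g⁻¹) ^ n) := by
  obtain ⟨k, rfl⟩ := Nat.exists_eq_add_of_le' hn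
  have hφ0 : constantCoeff (X * g) = 0 := by simp
  have hφ : HasSubst (X * g) := HasSubst.of_constantCoeff_zero' hφ0
  have hψ : HasSubst ψ := HasSubst.of_constantCoeff_zero' hψ0
  have hgh : g⁻¹ * g = 1 := PowerSeries.inv_mul_cancel g (by simp [hg])
  rw [comp'_eq_subst hψ0] at hinv ⊢
  have hψφ : subst (X * g) ψ = X := subst_eq_X_of_subst_eq_X hφ0 (by simp [hg]) hψ hinv
  have hf : subst (X * g) (subst ψ f) = f := by
    rw [subst_comp_subst_apply hψ hφ, hψφ, X_subst]
  have hdf : d⁄dX ℚ f = subst (X * g) (d⁄dX ℚ (subst ψ f)) * d⁄dX ℚ (X * g) := by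
    conv_lhs => rw [← hf]
    exact derivative_subst hφ
  change _ = coeff _ (d⁄dX ℚ f * _)
  rw [hdf, mul_assoc, Nat.add_sub_cancel, coeff_subst_mul hφ0,
    Finset.sum_eq_single_of_mem k (Finset.self_mem_range_succ k) fun m hm hmk => ?_,
    coeff_X_mul_pow_mul_derivative hgh le_rfl, if_pos rfl, mul_one, coeff_derivative]
  · push_cast
    ring
  · rw [coeff_X_mul_pow_mul_derivative hgh (Finset.mem_range_succ_iff.1 hm), if_neg hmk,
      mul_zero]
end

section
/- Vertical recurrence for exponential Riordan arrays: with d, g ∈ ℚ[[t]], d(0)=g(0)=1, h(t)=t·g(t), and r_{n,k} := n!·[t^n] d(t)·h(t)^k/k!, setting h_i := i!·[t^i] g(t), one has for all n ≥ k ≥ 1: k·r_{n,k} = n · Σ_{i=0}^{n−k} C(n−1, i) · h_i · r_{n−1−i, k−1}. -/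
/-!
Since `h = X·g`, the series `d·h^k` is `X·g·(d·h^(k-1))`, so its `n`-th coefficient is the
convolution `Σ_i g_i·[t^(n-1-i)] d·h^(k-1)`; the terms with `n - 1 - i < k - 1` vanish because
`X^(k-1)` divides `h^(k-1)`. Passing to exponential coefficients, `n!/k! · k` splits as
`n · C(n-1,i) · i! · (n-1-i)!/(k-1)!`.
-/

namespace PowerSeries

variable {R : Type*} [CommSemiring R]

theorem coeff_mul_X_mul_pow_eq_zero (f g : R⟦X⟧) {j m : ℕ} (hj : j < m) :
    coeff j (f * (X * g) ^ m) = 0 := by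
  rw [show f * (X * g) ^ m = X ^ m * (f * g ^ m) by ring, coeff_X_pow_mul', if_neg (by omega)]

theorem coeff_succ_mul_X_mul_pow_succ (f g : R⟦X⟧) (N m : ℕ) :
    coeff (N + 1) (f * (X * g) ^ (m + 1)) =
      ∑ i ∈ Finset.range (N - m + 1), coeff i g * coeff (N - i) (f * (X * g) ^ m) := by
  rw [show f * (X * g) ^ (m + 1) = X * (g * (f * (X * g) ^ m)) by ring, coeff_succ_X_mul,
    coeff_mul, Finset.Nat.sum_antidiagonal_eq_sum_range_succ_mk]
  refine (Finset.sum_subset (Finset.range_subset_range.mpr (by omega)) fun i hi hni => ?_).symm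
  simp only [Finset.mem_range] at hi hni
  rw [coeff_mul_X_mul_pow_eq_zero _ _ (by omega), mul_zero]

end PowerSeries

open PowerSeries

theorem Nat.cast_succ_factorial_eq_choose_mul {K : Type*} [CommSemiring K] {N i : ℕ}
    (hi : i ≤ N) :
    ((N + 1).factorial : K) = (N + 1) * (N.choose i * i.factorial * (N - i).factorial) := by
  rw [Nat.factorial_succ, ← Nat.choose_mul_factorial_mul_factorial hi]
  push_cast
  ring

theorem riordan_vertical_recurrence_general (d g : PowerSeries ℚ)
    (r : ℕ → ℕ → ℚ)
    (hr : ∀ n k, r n k =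
      (n.factorial : ℚ) * PowerSeries.coeff n (d * (PowerSeries.X * g) ^ k) /
        (k.factorial : ℚ))
    (n k : ℕ) (hk : 1 ≤ k) (hkn : k ≤ n) :
    (k : ℚ) * r n k =
      (n : ℚ) * ∑ i ∈ Finset.range (n - k + 1),
        ((n - 1).choose i : ℚ) * ((i.factorial : ℚ) * PowerSeries.coeff i g) *
          r (n - 1 - i) (k - 1) := by
  obtain ⟨m, rfl⟩ : ∃ m, k = m + 1 := ⟨k - 1, by omega⟩
  obtain ⟨N, rfl⟩ : ∃ N, n = N + 1 := ⟨n - 1, by omega⟩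
  simp only [hr, Nat.add_sub_cancel, Nat.add_sub_add_right, coeff_succ_mul_X_mul_pow_succ,
    Finset.mul_sum, Finset.sum_div]
  refine Finset.sum_congr rfl fun i hi => ?_
  rw [Nat.cast_succ_factorial_eq_choose_mul (K := ℚ) (i := i) (N := N) (by simp at hi; omega),
    Nat.factorial_succ, Nat.cast_mul]
  field_simp
  push_cast
  ring

/-- Vertical recurrence for exponential Riordan arrays: with `h = t·g` and
`r_{n,k} = n!·[t^n] d·h^k/k!`, `h_i = i!·[t^i] g`, one has for `n ≥ k ≥ 1`:
`k·r_{n,k} = n·Σ_{i=0}^{n-k} C(n-1,i)·h_i·r_{n-1-i,k-1}`. -/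
theorem riordan_vertical_recurrence (d g : PowerSeries ℚ)
    (hd : PowerSeries.constantCoeff d = 1)
    (hg : PowerSeries.constantCoeff g = 1)
    (r : ℕ → ℕ → ℚ)
    (hr : ∀ n k, r n k =
      (n.factorial : ℚ) * PowerSeries.coeff n (d * (PowerSeries.X * g) ^ k) /
        (k.factorial : ℚ))
    (n k : ℕ) (hk : 1 ≤ k) (hkn : k ≤ n) :
    (k : ℚ) * r n k =
      (n : ℚ) * ∑ i ∈ Finset.range (n - k + 1),
        ((n - 1).choose i : ℚ) * ((i.factorial : ℚ) * PowerSeries.coeff i g) *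
          r (n - 1 - i) (k - 1) :=
  riordan_vertical_recurrence_general d g r hr n k hk hkn
end
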